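/- Let u : ℝⁿ → ℝᵐ be 1-Lipschitz and let k ∈ {1,…,m}. For r ≥ 0 let C_{n,k}(r) be the set of k-dimensional convex cones C ⊆ ℝⁿ for which there exist c₁,…,c_k ∈ C of norm at most 1 whose Gram matrix has determinant at least r. Define β_k : ℝⁿ → ℝ by β_k(x) = sup{ r ≥ 0 : there exist C ∈ C_{n,k}(r) and a linear isometry T : span(C) → ℝᵐ such that u(x) − u(y) = T(x − y) for all y ∈ (x + C) ∩ B(x, r) }. Then β_k is real-valued and upper semicontinuous on ℝⁿ. -/

import Mathlib

/-- A subset of `ℝⁿ` is a convex cone if it is closed under addition and under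
multiplication by nonnegative scalars. -/
def IsConvexConeSet {n : ℕ} (C : Set (EuclideanSpace ℝ (Fin n))) : Prop :=
  (∀ c ∈ C, ∀ t : ℝ, 0 ≤ t → t • c ∈ C) ∧ ∀ a ∈ C, ∀ b ∈ C, a + b ∈ C

/-- `C ∈ C_{n,k}(r)`: `C` is a `k`-dimensional convex cone in `ℝⁿ` containing points
`c₁, …, c_k` of norm at most `1` whose Gram matrix has determinant at least `r`. -/
def MemCnk {n : ℕ} (k : ℕ) (r : ℝ) (C : Set (EuclideanSpace ℝ (Fin n))) : Prop :=
  IsConvexConeSet C ∧ Module.finrank ℝ (Submodule.span ℝ C) = k ∧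
  ∃ c : Fin k → EuclideanSpace ℝ (Fin n),
    (∀ i, c i ∈ C ∧ ‖c i‖ ≤ 1) ∧
    r ≤ (Matrix.of fun i j => (inner ℝ (c i) (c j) : ℝ)).det

/-- The set of radii `r ≥ 0` for which there exist a cone `C ∈ C_{n,k}(r)` and a linear
isometry `T : span C → ℝᵐ` with `u x − u y = T (x − y)` for all
`y ∈ (x + C) ∩ B(x, r)`. -/
def betaSet {n m : ℕ} (u : EuclideanSpace ℝ (Fin n) → EuclideanSpace ℝ (Fin m)) (k : ℕ)
    (x : EuclideanSpace ℝ (Fin n)) : Set ℝ :=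
  {r : ℝ | 0 ≤ r ∧ ∃ C : Set (EuclideanSpace ℝ (Fin n)), MemCnk k r C ∧
    ∃ T : EuclideanSpace ℝ (Fin n) →L[ℝ] EuclideanSpace ℝ (Fin m),
      (∀ v ∈ Submodule.span ℝ C, ‖T v‖ = ‖v‖) ∧
      ∀ y : EuclideanSpace ℝ (Fin n), y - x ∈ C → ‖y - x‖ ≤ r →
        u x - u y = T (x - y)}

/-- `β_k(x)` is the supremum of `betaSet u k x`. -/
noncomputable def betaK {n m : ℕ}
    (u : EuclideanSpace ℝ (Fin n) → EuclideanSpace ℝ (Fin m)) (k : ℕ)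
    (x : EuclideanSpace ℝ (Fin n)) : ℝ :=
  sSup (betaSet u k x)

/-!
A radius `r > 0` at `x` is certified by generators `c` of norm `≤ 1` with Gram determinant
`≥ r` and a map `T`, which after composing with the orthogonal projection onto `span c` may be
taken of norm `≤ 1`. So the certificates range over a compact set, and once the radius bound in
the isometry condition is made strict the conditions on `(x, c, T)` are closed. Projecting along
the compact factor shows that the closure of `{x | r ∈ betaSet u k x}` lies in
`{x | r' ∈ betaSet u k x}` for `0 < r' < r`, which gives upper semicontinuity of the supremum.
Boundedness holds because a Gram determinant of vectors in the unit ball is at most `k!`.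
-/

open Filter Topology Set Matrix Submodule

theorem upperSemicontinuous_sSup_of_closure_subset {X : Type*} [TopologicalSpace X]
    {S : X → Set ℝ} (hbdd : ∀ x, BddAbove (S x)) (hnonneg : ∀ x, ∀ s ∈ S x, 0 ≤ s)
    (hmono : ∀ x, ∀ s ∈ S x, ∀ r, 0 ≤ r → r ≤ s → r ∈ S x)
    (hclosure : ∀ r' r, 0 < r' → r' < r → closure {x | r ∈ S x} ⊆ {x | r' ∈ S x}) :
    UpperSemicontinuous fun x => sSup (S x) := by
  intro x b hb
  obtain ⟨r', hxr', hr'b⟩ := exists_between hb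
  obtain ⟨r, hr'r, hrb⟩ := exists_between hr'b
  have hr' : 0 < r' := (Real.sSup_nonneg (hnonneg x)).trans_lt hxr'
  have hx : x ∉ closure {y | r ∈ S y} := fun h =>
    (le_csSup (hbdd x) (hclosure r' r hr' hr'r h)).not_gt hxr'
  rw [mem_closure_iff_frequently, not_frequently] at hx
  filter_upwards [hx] with y hy
  refine (Real.sSup_le (fun s hs => ?_) (hr'.trans hr'r).le).trans_lt hrb
  exact le_of_not_gt fun hrs => hy (hmono y s hs r (hr'.trans hr'r).le hrs.le)

theorem isClosed_image_fst_of_subset_prod {X Y : Type*} [TopologicalSpace X]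
    [TopologicalSpace Y] {s : Set (X × Y)} {K : Set Y} (hK : IsCompact K) (hs : IsClosed s)
    (hsK : s ⊆ univ ×ˢ K) : IsClosed (Prod.fst '' s) := by
  have := isCompact_iff_compactSpace.mp hK
  have hs' : Prod.fst '' s = Prod.fst '' (Prod.map id ((↑) : K → Y) ⁻¹' s) := by
    ext x
    constructor
    · rintro ⟨⟨x, y⟩, h, rfl⟩
      exact ⟨(x, ⟨y, (hsK h).2⟩), h, rfl⟩
    · rintro ⟨⟨x, y⟩, h, rfl⟩
      exact ⟨_, h, rfl⟩
  rw [hs']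
  exact isClosedMap_fst_of_compactSpace _
    (hs.preimage (continuous_id.prodMap continuous_subtype_val))

theorem det_gram_le_factorial {E : Type*} [NormedAddCommGroup E] [InnerProductSpace ℝ E]
    {k : ℕ} (c : Fin k → E) (hc : ∀ i, ‖c i‖ ≤ 1) : (gram ℝ c).det ≤ k.factorial := by
  have hentry : ∀ i j, |gram ℝ c i j| ≤ 1 := fun i j =>
    (abs_real_inner_le_norm _ _).trans (mul_le_one₀ (hc i) (norm_nonneg _) (hc j))
  simpa [nsmul_eq_mul] using
    (le_abs_self _).trans (det_le (abv := AbsoluteValue.abs) hentry)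

section Witness

variable {E F : Type*} [NormedAddCommGroup E] [InnerProductSpace ℝ E] [NormedAddCommGroup F]
  [NormedSpace ℝ F] {k : ℕ}

/-- The radius bound is strict so that the set of witnesses is closed. -/
def IsBetaWitness (u : E → F) (x : E) (r : ℝ) (c : Fin k → E) (T : E →L[ℝ] F) : Prop :=
  (∀ i, ‖c i‖ ≤ 1) ∧ r ≤ (gram ℝ c).det ∧ ‖T‖ ≤ 1 ∧
    (∀ a : Fin k → ℝ, ‖T (∑ i, a i • c i)‖ = ‖∑ i, a i • c i‖) ∧
    ∀ t : Fin k → ℝ, (∀ i, 0 ≤ t i) → ‖∑ i, t i • c i‖ < r →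
      u x - u (x + ∑ i, t i • c i) = T (-∑ i, t i • c i)

theorem continuous_det_gram : Continuous fun c : Fin k → E => (gram ℝ c).det :=
  (continuous_matrix fun i j => (continuous_apply i).inner (continuous_apply j)).matrix_det

theorem isClosed_setOf_isBetaWitness {u : E → F} (hu : Continuous u) (r : ℝ) :
    IsClosed {q : E × (Fin k → E) × (E →L[ℝ] F) | IsBetaWitness u q.1 r q.2.1 q.2.2} := by
  simp only [IsBetaWitness, ofPred_and, ofPred_forall]
  refine .inter (isClosed_iInter fun i => isClosed_le (by fun_prop) continuous_const) <|
    .inter (isClosed_le continuous_const (continuous_det_gram.comp (by fun_prop))) <|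
    .inter (isClosed_le (by fun_prop) continuous_const) <|
    .inter (isClosed_iInter fun a => isClosed_eq (by fun_prop) (by fun_prop)) <|
    isClosed_iInter fun t => isClosed_iInter fun _ =>
      isClosed_imp (isOpen_lt (by fun_prop) continuous_const)
        (isClosed_eq (by fun_prop) (by fun_prop))

end Witness

section Beta

variable {n m : ℕ} {u : EuclideanSpace ℝ (Fin n) → EuclideanSpace ℝ (Fin m)} {k : ℕ}
  {x : EuclideanSpace ℝ (Fin n)}

theorem bddAbove_betaSet (u : EuclideanSpace ℝ (Fin n) → EuclideanSpace ℝ (Fin m)) (k : ℕ)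
    (x : EuclideanSpace ℝ (Fin n)) : BddAbove (betaSet u k x) :=
  ⟨k.factorial, fun _ ⟨_, _, ⟨_, _, c, hc, hdet⟩, _⟩ =>
    hdet.trans (det_gram_le_factorial c fun i => (hc i).2)⟩

theorem mem_betaSet_of_le {r s : ℝ} (hs : s ∈ betaSet u k x) (hr : 0 ≤ r) (hrs : r ≤ s) :
    r ∈ betaSet u k x := by
  obtain ⟨-, C, ⟨hC, hdim, c, hc, hdet⟩, T, hT, hTy⟩ := hs
  exact ⟨hr, C, ⟨hC, hdim, c, hc, hrs.trans hdet⟩, T, hT,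
    fun y hy hyr => hTy y hy (hyr.trans hrs)⟩

theorem exists_isBetaWitness_of_mem_betaSet {r : ℝ} (hr : r ∈ betaSet u k x) :
    ∃ (c : Fin k → EuclideanSpace ℝ (Fin n)) (T : _), IsBetaWitness u x r c T := by
  obtain ⟨-, C, ⟨⟨hCsmul, hCadd⟩, -, c, hc, hdet⟩, T, hT, hTy⟩ := hr
  set K := span ℝ (range c)
  have hKC : K ≤ span ℝ C := span_mono (range_subset_iff.2 fun i => (hc i).1)
  have hcomb : ∀ a : Fin k → ℝ, ∑ i, a i • c i ∈ K := fun a =>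
    sum_mem fun i _ => smul_mem _ _ (subset_span (mem_range_self i))
  -- `C` need not contain `0`, but the defining identity holds trivially at `0`
  have hcone : ∀ t : Fin k → ℝ, (∀ i, 0 ≤ t i) →
      ∑ i, t i • c i ∈ C ∨ ∑ i, t i • c i = 0 :=
    fun t ht => Finset.sum_induction _ (fun v => v ∈ C ∨ v = 0)
      (fun a b ha hb => by
        rcases ha with ha | rfl
        · rcases hb with hb | rfl
          · exact .inl (hCadd a ha b hb)
          · simpa using Or.inl ha
        · simpa using hb) (.inr rfl)
      fun i _ => Or.inl (hCsmul _ (hc i).1 _ (ht i))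
  refine ⟨c, T ∘L K.starProjection, fun i => (hc i).2, hdet, ?_, fun a => ?_,
    fun t ht hlt => ?_⟩
  · exact ContinuousLinearMap.opNorm_le_bound _ zero_le_one fun v => by
      rw [ContinuousLinearMap.comp_apply, hT _ (hKC (K.starProjection_apply_mem v)), one_mul]
      exact K.norm_starProjection_apply_le v
  · rw [ContinuousLinearMap.comp_apply, starProjection_eq_self_iff.2 (hcomb a)]
    exact hT _ (hKC (hcomb a))
  · rw [ContinuousLinearMap.comp_apply, starProjection_eq_self_iff.2 (neg_mem (hcomb t))]
    rcases hcone t ht with hv | hv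
    · have := hTy (x + ∑ i, t i • c i) (by rwa [add_sub_cancel_left])
        (by rw [add_sub_cancel_left]; exact hlt.le)
      rwa [sub_add_cancel_left] at this
    · simp [hv]

theorem mem_betaSet_of_isBetaWitness {r r' : ℝ} {c : Fin k → EuclideanSpace ℝ (Fin n)}
    {T : EuclideanSpace ℝ (Fin n) →L[ℝ] EuclideanSpace ℝ (Fin m)} (hr' : 0 < r')
    (hr'r : r' < r) (h : IsBetaWitness u x r c T) : r' ∈ betaSet u k x := by
  obtain ⟨hc, hdet, -, hT, hTu⟩ := h
  set C := {v | ∃ t : Fin k → ℝ, (∀ i, 0 ≤ t i) ∧ v = ∑ i, t i • c i}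
  have hcC : ∀ i, c i ∈ C := fun i =>
    ⟨Pi.single i 1, fun j => by by_cases hj : j = i <;> simp [hj], by simp⟩
  have hspan : span ℝ C = span ℝ (range c) := by
    refine le_antisymm (span_le.2 ?_) (span_mono (range_subset_iff.2 hcC))
    rintro _ ⟨t, -, rfl⟩
    exact sum_mem fun i _ => smul_mem _ _ (subset_span (mem_range_self i))
  have hli : LinearIndependent ℝ c :=
    linearIndependent_of_det_gram_ne_zero (hr'.trans (hr'r.trans_le hdet)).ne'
  refine ⟨hr'.le, C, ⟨⟨?_, ?_⟩, ?_, c, fun i => ⟨hcC i, hc i⟩, ?_⟩, T, ?_, ?_⟩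
  · rintro _ ⟨t, ht, rfl⟩ s hs
    exact ⟨s • t, fun i => mul_nonneg hs (ht i), by simp [Finset.smul_sum, smul_smul]⟩
  · rintro _ ⟨t, ht, rfl⟩ _ ⟨t', ht', rfl⟩
    exact ⟨t + t', fun i => add_nonneg (ht i) (ht' i),
      by simp [add_smul, Finset.sum_add_distrib]⟩
  · rw [hspan]
    simpa using finrank_span_eq_card hli
  · exact (hr'r.trans_le hdet).le
  · intro v hv
    obtain ⟨a, rfl⟩ := mem_span_range_iff_exists_fun ℝ |>.1 (hspan ▸ hv)
    exact hT a
  · rintro y ⟨t, ht, hy⟩ hyr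
    rw [sub_eq_iff_eq_add'] at hy
    subst hy
    rw [add_sub_cancel_left] at hyr
    rw [sub_add_cancel_left]
    exact hTu t ht (hyr.trans_lt hr'r)

theorem closure_setOf_mem_betaSet_subset (hu : Continuous u) {r r' : ℝ} (hr' : 0 < r')
    (hr'r : r' < r) : closure {x | r ∈ betaSet u k x} ⊆ {x | r' ∈ betaSet u k x} := by
  set W := {q : EuclideanSpace ℝ (Fin n) × (Fin k → EuclideanSpace ℝ (Fin n)) ×
    (EuclideanSpace ℝ (Fin n) →L[ℝ] EuclideanSpace ℝ (Fin m)) |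
      IsBetaWitness u q.1 r q.2.1 q.2.2}
  set K : Set ((Fin k → EuclideanSpace ℝ (Fin n)) ×
      (EuclideanSpace ℝ (Fin n) →L[ℝ] EuclideanSpace ℝ (Fin m))) :=
    (univ.pi fun _ => Metric.closedBall 0 1) ×ˢ Metric.closedBall 0 1
  have hK : IsCompact K :=
    (isCompact_univ_pi fun _ => isCompact_closedBall _ _).prod (isCompact_closedBall _ _)
  have hWK : W ⊆ univ ×ˢ K := fun q hq =>
    ⟨trivial, fun i _ => by simpa using hq.1 i, by simpa using hq.2.2.1⟩
  calc closure {x | r ∈ betaSet u k x}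
      ⊆ closure (Prod.fst '' W) := closure_mono fun x hx =>
        let ⟨c, T, h⟩ := exists_isBetaWitness_of_mem_betaSet hx
        ⟨(x, c, T), h, rfl⟩
    _ = Prod.fst '' W :=
        (isClosed_image_fst_of_subset_prod hK (isClosed_setOf_isBetaWitness hu r) hWK).closure_eq
    _ ⊆ {x | r' ∈ betaSet u k x} := by
        rintro _ ⟨⟨x, c, T⟩, h, rfl⟩
        exact mem_betaSet_of_isBetaWitness hr' hr'r h

end Beta

theorem stmt_13_general {n m : ℕ} (u : EuclideanSpace ℝ (Fin n) → EuclideanSpace ℝ (Fin m))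
    (hu : LipschitzWith 1 u) (k : ℕ) :
    (∀ x, BddAbove (betaSet u k x)) ∧ UpperSemicontinuous (betaK u k) :=
  ⟨bddAbove_betaSet u k,
    upperSemicontinuous_sSup_of_closure_subset (bddAbove_betaSet u k) (fun _ _ hs => hs.1)
      (fun _ _ hs _ hr hrs => mem_betaSet_of_le hs hr hrs)
      (fun _ _ hr' hr'r => closure_setOf_mem_betaSet_subset hu.continuous hr' hr'r)⟩

/-- For a `1`-Lipschitz map `u : ℝⁿ → ℝᵐ` and `k ∈ {1, …, m}`, the
function `β_k` is real-valued (the defining set of radii is bounded above) and upper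
semicontinuous on `ℝⁿ`. -/
theorem stmt_13 {n m : ℕ} (u : EuclideanSpace ℝ (Fin n) → EuclideanSpace ℝ (Fin m))
    (hu : LipschitzWith 1 u) (k : ℕ) (hk1 : 1 ≤ k) (hkm : k ≤ m) :
    (∀ x, BddAbove (betaSet u k x)) ∧ UpperSemicontinuous (betaK u k) :=
  stmt_13_general u hu k
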